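/- arXiv:1307.2323 — 3 statements merged into one kernel-verified Lean document; each statement's English description precedes it below -/
import Mathlib

section
/- Let ρ and π be density matrices on ℂ^n with ρ ≠ π and with the range of π contained in the range of ρ, and let λ_min(ρ) denote the smallest nonzero eigenvalue of ρ. Then the matrix σ := ρ + (λ_min(ρ) / D(ρ,π))·(ρ − π) is positive semidefinite with trace 1, hence a density matrix. -/
open Matrix
open scoped ComplexOrder

/-- A density matrix on ℂ^n: positive semidefinite with trace 1. -/
def IsDensityMatrix {n : ℕ} (ρ : Matrix (Fin n) (Fin n) ℂ) : Prop :=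
  ρ.PosSemidef ∧ ρ.trace = 1

/-- The trace distance between two matrices whose difference is Hermitian:
half the sum of the absolute values of the eigenvalues of the difference. -/
noncomputable def traceDist {n : ℕ} (ρ π : Matrix (Fin n) (Fin n) ℂ) : ℝ :=
  if h : (ρ - π).IsHermitian then (1 / 2) * ∑ i, |h.eigenvalues i| else 0

/-- The smallest nonzero eigenvalue of a Hermitian matrix. -/
noncomputable def lambdaMin {n : ℕ} (ρ : Matrix (Fin n) (Fin n) ℂ) : ℝ :=
  if h : ρ.IsHermitian then sInf {x : ℝ | (∃ i, h.eigenvalues i = x) ∧ x ≠ 0} else 0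

/-! Write `Δ = ρ - π`, `D = D(ρ, π)`, `λ = λ_min(ρ)` and let `P` be the orthogonal projection onto
the range of `ρ`. Since `tr Δ = 0`, each eigenvalue of `Δ` is minus the sum of the others, so its
absolute value is at most half the sum of all absolute values, which is `D`; thus `Δ + D ≥ 0`.
The range hypothesis gives `ker ρ ⊆ ker π`, hence `Δ = PΔP`, while `ρ ≥ λP` by the definition
of `λ`. Therefore `ρ + (λ / D) Δ = (ρ - λP) + (λ / D) P (Δ + D) P ≥ 0`. -/

namespace Matrix.IsHermitian

variable {n 𝕜 : Type*} [RCLike 𝕜] [Fintype n] [DecidableEq n] {A : Matrix n n 𝕜}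
  (hA : A.IsHermitian)

lemma cfc_id : hA.cfc id = A := hA.spectral_theorem.symm

lemma cfc_one : hA.cfc 1 = 1 := by
  simp [IsHermitian.cfc, Function.comp_def]

lemma cfc_add (f g : ℝ → ℝ) : hA.cfc (f + g) = hA.cfc f + hA.cfc g := by
  simp only [IsHermitian.cfc, ← map_add, diagonal_add]
  congr 2
  ext
  simp

lemma cfc_sub (f g : ℝ → ℝ) : hA.cfc (f - g) = hA.cfc f - hA.cfc g := by
  simp only [IsHermitian.cfc, ← map_sub, diagonal_sub]
  congr 2
  ext
  simp

lemma cfc_mul (f g : ℝ → ℝ) : hA.cfc (f * g) = hA.cfc f * hA.cfc g := by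
  simp only [IsHermitian.cfc, ← map_mul, diagonal_mul_diagonal]
  congr 2
  ext
  simp

lemma cfc_smul (r : ℝ) (f : ℝ → ℝ) : hA.cfc (r • f) = r • hA.cfc f := by
  simp only [IsHermitian.cfc, RCLike.real_smul_eq_coe_smul (K := 𝕜), ← map_smul, ← diagonal_smul]
  congr 2
  ext
  simp

lemma posSemidef_cfc {f : ℝ → ℝ} (hf : ∀ i, 0 ≤ f (hA.eigenvalues i)) :
    (hA.cfc f).PosSemidef := by
  rw [IsHermitian.cfc, Unitary.conjStarAlgAut_apply,
    Unitary.isUnit_coe.posSemidef_star_right_conjugate_iff, posSemidef_diagonal_iff]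
  simpa using hf

noncomputable def supportProjection : Matrix n n 𝕜 :=
  hA.cfc fun x => if x = 0 then 0 else 1

lemma posSemidef_supportProjection : hA.supportProjection.PosSemidef :=
  hA.posSemidef_cfc fun i => by split_ifs <;> norm_num

lemma supportProjection_mul_self :
    hA.supportProjection * hA.supportProjection = hA.supportProjection := by
  rw [supportProjection, ← cfc_mul]
  congr 1
  ext x
  split_ifs <;> simp [*]

lemma mul_supportProjection : A * hA.supportProjection = A := by
  have h : hA.cfc (id * fun x => if x = 0 then 0 else 1) = hA.cfc id := by
    congr 1
    ext x
    by_cases hx : x = 0 <;> simp [hx]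
  rwa [cfc_mul, cfc_id] at h

lemma posSemidef_sub_smul_supportProjection {l : ℝ}
    (hl : ∀ i, hA.eigenvalues i ≠ 0 → l ≤ hA.eigenvalues i) :
    (A - l • hA.supportProjection).PosSemidef := by
  have h : A - l • hA.supportProjection =
      hA.cfc (id - l • fun x => if x = 0 then 0 else 1) := by
    rw [cfc_sub, cfc_smul, cfc_id, supportProjection]
  rw [h]
  refine hA.posSemidef_cfc fun i => ?_
  by_cases h0 : hA.eigenvalues i = 0
  · simp [h0]
  · simpa [h0] using hl i h0

lemma posSemidef_add_smul_one {d : ℝ} (hd : ∀ i, -d ≤ hA.eigenvalues i) :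
    (A + d • 1).PosSemidef := by
  have : A + d • 1 = hA.cfc (id + d • 1) := by rw [cfc_add, cfc_smul, cfc_one, cfc_id]
  rw [this]
  exact hA.posSemidef_cfc fun i => by simpa [neg_le_iff_add_nonneg] using hd i

end Matrix.IsHermitian

namespace Matrix

lemma mul_eq_zero_of_ker_le {m k n p R : Type*} [CommRing R] [Fintype n] [Fintype p]
    [DecidableEq p] {A : Matrix m n R} {B : Matrix k n R} {M : Matrix n p R}
    (hker : LinearMap.ker A.mulVecLin ≤ LinearMap.ker B.mulVecLin) (h : A * M = 0) :
    B * M = 0 := by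
  refine ext_of_mulVec_single fun j => ?_
  have hA : A *ᵥ (M *ᵥ Pi.single j 1) = 0 := by rw [mulVec_mulVec, h, zero_mulVec]
  rw [← mulVec_mulVec, zero_mulVec]
  exact hker hA

variable {n 𝕜 : Type*} [RCLike 𝕜] [Fintype n]

lemma ker_mulVecLin_le_of_range_le {A B : Matrix n n 𝕜} (hA : A.IsHermitian)
    (hB : B.PosSemidef) (h : LinearMap.range B.mulVecLin ≤ LinearMap.range A.mulVecLin) :
    LinearMap.ker A.mulVecLin ≤ LinearMap.ker B.mulVecLin := by
  intro x hx
  rw [LinearMap.mem_ker, mulVecLin_apply] at hx ⊢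
  obtain ⟨u, hu⟩ := h (LinearMap.mem_range_self B.mulVecLin x)
  simp only [mulVecLin_apply] at hu
  rw [← hB.dotProduct_mulVec_zero_iff, ← hu, dotProduct_mulVec, ← hA.eq, ← star_mulVec, hx,
    star_zero, zero_dotProduct]

variable [DecidableEq n]

theorem posSemidef_add_smul_of_ker_le {A B : Matrix n n 𝕜} (hA : A.IsHermitian)
    (hB : B.IsHermitian) (hker : LinearMap.ker A.mulVecLin ≤ LinearMap.ker B.mulVecLin)
    {l d c : ℝ} (hl : ∀ i, hA.eigenvalues i ≠ 0 → l ≤ hA.eigenvalues i)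
    (hd : (B + d • 1).PosSemidef) (hc : 0 ≤ c) (hcd : c * d ≤ l) :
    (A + c • B).PosSemidef := by
  set P := hA.supportProjection
  have hPP : P * P = P := hA.supportProjection_mul_self
  have hP : P.PosSemidef := hA.posSemidef_supportProjection
  have hBP : B * P = B := by
    have h : A * (1 - P) = 0 := by rw [mul_sub, mul_one, hA.mul_supportProjection, sub_self]
    have hB1P := mul_eq_zero_of_ker_le hker h
    rw [mul_sub, mul_one, sub_eq_zero] at hB1P
    exact hB1P.symm
  have hPB : P * B = B := by
    simpa [hP.1.eq, hB.eq] using congrArg conjTranspose hBP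
  have hsplit : A + c • B =
      (A - l • P) + c • (Pᴴ * (B + d • 1) * P) + (l - c * d) • P := by
    rw [hP.1.eq, mul_add, add_mul, hPB, hBP, mul_smul_comm, mul_one, smul_mul_assoc, hPP]
    module
  rw [hsplit]
  exact ((hA.posSemidef_sub_smul_supportProjection hl).add
    ((hd.conjTranspose_mul_mul_same P).smul hc)).add (hP.smul (sub_nonneg.mpr hcd))

end Matrix

lemma abs_le_half_sum_abs_of_sum_eq_zero {ι : Type*} [Fintype ι] {f : ι → ℝ}
    (hf : ∑ j, f j = 0) (i : ι) : |f i| ≤ 1 / 2 * ∑ j, |f j| := by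
  classical
  have hrest : ∑ j ∈ Finset.univ.erase i, f j = -f i := by
    linarith [Finset.add_sum_erase Finset.univ f (Finset.mem_univ i)]
  have habs := Finset.add_sum_erase Finset.univ (fun j => |f j|) (Finset.mem_univ i)
  have htriangle := Finset.abs_sum_le_sum_abs f (Finset.univ.erase i)
  rw [hrest, abs_neg] at htriangle
  linarith

variable {n : ℕ}

lemma lambdaMin_nonneg {ρ : Matrix (Fin n) (Fin n) ℂ} (hρ : ρ.PosSemidef) : 0 ≤ lambdaMin ρ := by
  rw [lambdaMin, dif_pos hρ.1]
  exact Real.sInf_nonneg fun x ⟨⟨i, hi⟩, _⟩ => hi ▸ hρ.eigenvalues_nonneg i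

lemma lambdaMin_le_eigenvalues {ρ : Matrix (Fin n) (Fin n) ℂ} (hρ : ρ.IsHermitian) {i : Fin n}
    (hi : hρ.eigenvalues i ≠ 0) : lambdaMin ρ ≤ hρ.eigenvalues i := by
  rw [lambdaMin, dif_pos hρ]
  exact csInf_le ((Set.finite_range hρ.eigenvalues).subset fun x hx => hx.1).bddBelow
    ⟨⟨i, rfl⟩, hi⟩

lemma traceDist_nonneg (ρ π : Matrix (Fin n) (Fin n) ℂ) : 0 ≤ traceDist ρ π := by
  unfold traceDist
  split_ifs <;> positivity

lemma abs_eigenvalues_le_traceDist {ρ π : Matrix (Fin n) (Fin n) ℂ} (h : (ρ - π).IsHermitian)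
    (htr : (ρ - π).trace = 0) (i : Fin n) : |h.eigenvalues i| ≤ traceDist ρ π := by
  rw [traceDist, dif_pos h]
  refine abs_le_half_sum_abs_of_sum_eq_zero ?_ i
  rw [h.trace_eq_sum_eigenvalues] at htr
  simpa using congrArg Complex.re htr

theorem stmt_4_general {n : ℕ} (ρ π : Matrix (Fin n) (Fin n) ℂ)
    (hρ : IsDensityMatrix ρ) (hπ : IsDensityMatrix π)
    (hrange : LinearMap.range π.mulVecLin ≤ LinearMap.range ρ.mulVecLin) :
    (ρ + ((lambdaMin ρ / traceDist ρ π : ℝ) : ℂ) • (ρ - π)).PosSemidef ∧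
    (ρ + ((lambdaMin ρ / traceDist ρ π : ℝ) : ℂ) • (ρ - π)).trace = 1 := by
  obtain ⟨hρ, hρtr⟩ := hρ
  obtain ⟨hπ, hπtr⟩ := hπ
  have hΔ : (ρ - π).IsHermitian := hρ.1.sub hπ.1
  have hΔtr : (ρ - π).trace = 0 := by rw [trace_sub, hρtr, hπtr, sub_self]
  have hker : LinearMap.ker ρ.mulVecLin ≤ LinearMap.ker (ρ - π).mulVecLin := fun x hx => by
    have hπx : π *ᵥ x = 0 := ker_mulVecLin_le_of_range_le hρ.1 hπ hrange hx
    rw [LinearMap.mem_ker, mulVecLin_apply, sub_mulVec, hπx, sub_zero]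
    exact hx
  have hshift : (ρ - π + traceDist ρ π • 1).PosSemidef :=
    hΔ.posSemidef_add_smul_one fun i =>
      neg_le_of_abs_le (abs_eigenvalues_le_traceDist hΔ hΔtr i)
  have hcd : lambdaMin ρ / traceDist ρ π * traceDist ρ π ≤ lambdaMin ρ := by
    rcases eq_or_ne (traceDist ρ π) 0 with hD | hD
    · rw [hD, mul_zero]
      exact lambdaMin_nonneg hρ
    · rw [div_mul_cancel₀ _ hD]
  rw [Complex.coe_smul]
  exact ⟨posSemidef_add_smul_of_ker_le hρ.1 hΔ hker (fun i => lambdaMin_le_eigenvalues hρ.1)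
    hshift (div_nonneg (lambdaMin_nonneg hρ) (traceDist_nonneg ρ π)) hcd, by simp [hΔtr, hρtr]⟩

theorem stmt_4 {n : ℕ} (ρ π : Matrix (Fin n) (Fin n) ℂ)
    (hρ : IsDensityMatrix ρ) (hπ : IsDensityMatrix π) (hne : ρ ≠ π)
    (hrange : LinearMap.range π.mulVecLin ≤ LinearMap.range ρ.mulVecLin) :
    (ρ + ((lambdaMin ρ / traceDist ρ π : ℝ) : ℂ) • (ρ - π)).PosSemidef ∧
    (ρ + ((lambdaMin ρ / traceDist ρ π : ℝ) : ℂ) • (ρ - π)).trace = 1 :=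
  stmt_4_general ρ π hρ hπ hrange
end

section
/- Let P be a homogeneous multivariate polynomial of degree D ≥ 1 in n complex variables, and let ρ be a density matrix on ℂ^n with rank ρ ≥ 2 (a mixed state). Then the zero-E equivalency of ρ is nonzero: there exist λ > 0, a density matrix ρ_L belonging to Z (the set of finite convex combinations of pure states annihilating P), and a density matrix ω, such that ρ = λ·ρ_L + (1−λ)·ω. -/
/-!
Take eigenvectors `u_a`, `u_b` of `ρ` with eigenvalues `μ_a, μ_b > 0`. Restricted to the line
`u_a + t u_b`, the degree-`D` form `P` either has a root in `t` (algebraic closedness) or is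
constant, and then homogeneity forces `P u_b = 0`; normalising gives a unit zero
`v = α u_a + β u_b`. As `(α, β)` and `(-β̄, ᾱ)` are orthonormal, `v v† ≤ u_a u_a† + u_b u_b†`,
so `ρ - λ v v† ⪰ 0` for `λ = min(μ_a, μ_b, 1/2)`, and `ω = (ρ - λ v v†) / (1 - λ)` is a state.
-/

open Matrix
open scoped ComplexOrder

/-- The set of density matrices expressible as a finite convex combination of rank-one
projections onto unit vectors annihilating `P`. -/
def ZeroSet {n : ℕ} (P : MvPolynomial (Fin n) ℂ) : Set (Matrix (Fin n) (Fin n) ℂ) :=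
  { σ | ∃ (m : ℕ) (q : Fin m → ℝ) (v : Fin m → Fin n → ℂ),
      (∀ j, 0 ≤ q j) ∧ (∑ j, q j) = 1 ∧ (∀ j, star (v j) ⬝ᵥ v j = 1) ∧
      (∀ j, MvPolynomial.eval (v j) P = 0) ∧
      σ = ∑ j, ((q j : ℝ) : ℂ) • Matrix.vecMulVec (v j) (star (v j)) }

namespace MvPolynomial

variable {R σ : Type*}

theorem IsHomogeneous.eval_smul [CommSemiring R] {P : MvPolynomial σ R} {D : ℕ}
    (hP : P.IsHomogeneous D) (c : R) (x : σ → R) :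
    eval (c • x) P = c ^ D * eval x P := by
  rw [eval_eq, eval_eq, Finset.mul_sum]
  refine Finset.sum_congr rfl fun d hd => ?_
  have hdeg : d.degree = D := by
    by_contra h
    exact mem_support_iff.mp hd (hP.coeff_eq_zero h)
  simp only [Pi.smul_apply, smul_eq_mul, mul_pow, Finset.prod_mul_distrib,
    Finset.prod_pow_eq_pow_sum, ← hdeg, Finsupp.degree_apply]
  ring

noncomputable def restrictLine [CommRing R] (P : MvPolynomial σ R) (x y : σ → R) :
    Polynomial R :=
  aeval (fun i => Polynomial.C (x i) + Polynomial.C (y i) * Polynomial.X) P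

theorem eval_restrictLine [CommRing R] (P : MvPolynomial σ R) (x y : σ → R) (t : R) :
    (P.restrictLine x y).eval t = eval (x + t • y) P := by
  rw [restrictLine, ← Polynomial.coe_aeval_eq_eval, comp_aeval_apply]
  have hpoint : (fun i => Polynomial.aeval t (Polynomial.C (x i) + Polynomial.C (y i) *
      Polynomial.X)) = x + t • y := by
    funext i
    simp only [map_add, map_mul, Polynomial.aeval_C, Polynomial.aeval_X, Algebra.algebraMap_self,
      RingHom.id_apply, Pi.add_apply, Pi.smul_apply, smul_eq_mul, mul_comm]
  rw [hpoint]
  rfl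

/-- For `s ≠ 0` homogeneity gives `P (y + s • x) = s ^ D * c`, a polynomial identity in `s`
which at `s = 0` reads `P y = c * 0 ^ D = 0`. -/
theorem IsHomogeneous.eval_eq_zero_of_forall_eval_add_smul_eq [Field R] [Infinite R]
    {P : MvPolynomial σ R} {D : ℕ} (hP : P.IsHomogeneous D) (hD : D ≠ 0) {x y : σ → R} {c : R}
    (hc : ∀ t : R, eval (x + t • y) P = c) : eval y P = 0 := by
  have hr : P.restrictLine y x = Polynomial.C c * Polynomial.X ^ D := by
    refine sub_eq_zero.mp (Polynomial.eq_zero_of_infinite_isRoot _ ?_)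
    refine (Set.finite_singleton (0 : R)).infinite_compl.mono fun s (hs : s ≠ 0) => ?_
    have hline : y + s • x = s • (x + s⁻¹ • y) := by
      rw [smul_add, smul_smul, mul_inv_cancel₀ hs, one_smul, add_comm]
    rw [Set.mem_ofPred_eq, Polynomial.IsRoot.def, Polynomial.eval_sub, eval_restrictLine, hline,
      hP.eval_smul, hc, Polynomial.eval_mul, Polynomial.eval_C, Polynomial.eval_X_pow, mul_comm,
      sub_self]
  have := congrArg (Polynomial.eval 0) hr
  rwa [eval_restrictLine, zero_smul, add_zero, Polynomial.eval_mul, Polynomial.eval_X_pow,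
    zero_pow hD, mul_zero] at this

theorem IsHomogeneous.exists_eval_add_smul_eq_zero_or [Field R] [IsAlgClosed R]
    {P : MvPolynomial σ R} {D : ℕ} (hP : P.IsHomogeneous D) (hD : D ≠ 0) (x y : σ → R) :
    (∃ t : R, eval (x + t • y) P = 0) ∨ eval y P = 0 := by
  by_cases hq : (P.restrictLine x y).degree = 0
  · right
    refine hP.eval_eq_zero_of_forall_eval_add_smul_eq hD (x := x)
      (c := (P.restrictLine x y).coeff 0) fun t => ?_
    rw [← eval_restrictLine, Polynomial.eq_C_of_degree_eq_zero hq, Polynomial.eval_C,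
      Polynomial.coeff_C_zero]
  · left
    obtain ⟨t, ht⟩ := IsAlgClosed.exists_root _ hq
    exact ⟨t, by rwa [← eval_restrictLine]⟩

theorem IsHomogeneous.exists_normalized_eval_smul_add_smul_eq_zero {P : MvPolynomial σ ℂ}
    {D : ℕ} (hP : P.IsHomogeneous D) (hD : D ≠ 0) (x y : σ → ℂ) :
    ∃ α β : ℂ, star α * α + star β * β = 1 ∧ eval (α • x + β • y) P = 0 := by
  rcases hP.exists_eval_add_smul_eq_zero_or hD x y with ⟨t, ht⟩ | hy
  · have ht0 := Complex.normSq_nonneg t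
    set N : ℝ := √(1 + Complex.normSq t)
    have hN : N ^ 2 = 1 + Complex.normSq t := Real.sq_sqrt (by linarith)
    have hN0 : N ≠ 0 := (Real.sqrt_pos.mpr (by linarith)).ne'
    refine ⟨(N⁻¹ : ℝ), (N⁻¹ : ℝ) * t, ?_, ?_⟩
    · have hN' : (N : ℂ) ^ 2 = 1 + (starRingEnd ℂ) t * t := by
        rw [← Complex.normSq_eq_conj_mul_self]
        exact_mod_cast hN
      simp only [star_mul', Complex.star_def, Complex.conj_ofReal]
      push_cast
      field_simp
      linear_combination -hN'
    · rw [mul_smul, ← smul_add, hP.eval_smul, ht, mul_zero]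
  · exact ⟨0, 1, by simp, by simpa using hy⟩

end MvPolynomial

namespace Matrix

variable {ι K 𝕜 : Type*}

section CommRing

variable [CommRing K] [StarRing K]

/-- `(α, β)` and `(-β̄, ᾱ)` are the columns of a unitary `2 × 2` matrix. -/
theorem vecMulVec_star_add_vecMulVec_star_rotate {α β : K} (h : star α * α + star β * β = 1)
    (x y : ι → K) :
    vecMulVec (α • x + β • y) (star (α • x + β • y)) +
        vecMulVec (-star β • x + star α • y) (star (-star β • x + star α • y)) =
      vecMulVec x (star x) + vecMulVec y (star y) := by
  ext i j
  simp only [add_apply, vecMulVec_apply, Pi.add_apply, Pi.smul_apply, Pi.star_apply, smul_eq_mul,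
    star_add, star_mul', star_neg, star_star]
  linear_combination (x i * star (x j) + y i * star (y j)) * h

theorem mul_vecMulVec_star_mul_conjTranspose [Fintype ι] (M : Matrix ι ι K) (w : ι → K) :
    M * vecMulVec w (star w) * Mᴴ = vecMulVec (M *ᵥ w) (star (M *ᵥ w)) := by
  rw [mul_vecMulVec, vecMulVec_mul, star_mulVec]

theorem star_mulVec_dotProduct_mulVec_of_mem_unitaryGroup [Fintype ι] [DecidableEq ι]
    {U : Matrix ι ι K} (hU : U ∈ unitaryGroup ι K) (w : ι → K) :
    star (U *ᵥ w) ⬝ᵥ (U *ᵥ w) = star w ⬝ᵥ w := by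
  rw [star_mulVec, dotProduct_mulVec, vecMul_vecMul, ← star_eq_conjTranspose,
    Unitary.star_mul_self_of_mem hU, vecMul_one]

end CommRing

variable [Fintype ι] [RCLike 𝕜] [DecidableEq ι]

theorem posSemidef_diagonal_sub_smul_vecMulVec {μ : ι → ℝ} (hμ : 0 ≤ μ) {a b : ι} (hab : a ≠ b)
    {lam : ℝ} (hlam : 0 ≤ lam) (ha : lam ≤ μ a) (hb : lam ≤ μ b) {α β : 𝕜}
    (hαβ : star α * α + star β * β = 1) :
    (diagonal (fun i => (μ i : 𝕜)) - (lam : 𝕜) •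
      vecMulVec (α • Pi.single a 1 + β • Pi.single b 1)
        (star (α • Pi.single a 1 + β • Pi.single b 1))).PosSemidef := by
  set w' : ι → 𝕜 := -star β • Pi.single a 1 + star α • Pi.single b 1
  have hrot := vecMulVec_star_add_vecMulVec_star_rotate hαβ (Pi.single a (1 : 𝕜)) (Pi.single b 1)
  set d : ι → ℝ := μ - lam • (Pi.single a 1 + Pi.single b 1)
  have hd : 0 ≤ d := by
    intro i
    by_cases hia : i = a
    · subst hia; simp [d, hab, ha]
    by_cases hib : i = b
    · subst hib; simp [d, hia, hb]
    simpa [d, hia, hib] using hμ i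
  have hdiag : diagonal (fun i => (μ i : 𝕜)) - (lam : 𝕜) •
      (vecMulVec (Pi.single a 1) (star (Pi.single a 1)) +
        vecMulVec (Pi.single b 1) (star (Pi.single b 1))) = diagonal (fun i => (d i : 𝕜)) := by
    ext i j
    simp only [sub_apply, smul_apply, add_apply, diagonal_apply, vecMulVec_apply, Pi.single_apply,
      Pi.star_apply, d]
    split_ifs <;> simp_all
  have hsplit : diagonal (fun i => (μ i : 𝕜)) - (lam : 𝕜) •
      vecMulVec (α • Pi.single a 1 + β • Pi.single b 1)
        (star (α • Pi.single a 1 + β • Pi.single b 1)) =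
      diagonal (fun i => (d i : 𝕜)) + (lam : 𝕜) • vecMulVec w' (star w') := by
    rw [eq_sub_of_add_eq hrot, smul_sub, ← hdiag]
    abel
  rw [hsplit]
  exact (PosSemidef.diagonal fun i => by simpa using hd i).add
    ((posSemidef_vecMulVec_self_star w').smul (by simpa using hlam))

theorem IsHermitian.exists_ne_eigenvalues_ne_zero {A : Matrix ι ι 𝕜} (hA : A.IsHermitian)
    (hrank : 2 ≤ A.rank) :
    ∃ a b, a ≠ b ∧ hA.eigenvalues a ≠ 0 ∧ hA.eigenvalues b ≠ 0 := by
  rw [hA.rank_eq_card_non_zero_eigs] at hrank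
  obtain ⟨⟨a, ha⟩, ⟨b, hb⟩, hab⟩ := Fintype.exists_pair_of_one_lt_card hrank
  exact ⟨a, b, fun h => hab (Subtype.ext h), ha, hb⟩

theorem PosSemidef.sub_smul_vecMulVec_eigenvectorBasis {A : Matrix ι ι 𝕜} (hA : A.PosSemidef)
    {a b : ι} (hab : a ≠ b) {lam : ℝ} (hlam : 0 ≤ lam) (ha : lam ≤ hA.1.eigenvalues a)
    (hb : lam ≤ hA.1.eigenvalues b) {α β : 𝕜} (hαβ : star α * α + star β * β = 1) :
    (A - (lam : 𝕜) • vecMulVec (α • ⇑(hA.1.eigenvectorBasis a) + β • ⇑(hA.1.eigenvectorBasis b))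
      (star (α • ⇑(hA.1.eigenvectorBasis a) + β • ⇑(hA.1.eigenvectorBasis b)))).PosSemidef := by
  set U : Matrix ι ι 𝕜 := ↑hA.1.eigenvectorUnitary
  have hv : α • ⇑(hA.1.eigenvectorBasis a) + β • ⇑(hA.1.eigenvectorBasis b) =
      U *ᵥ (α • Pi.single a 1 + β • Pi.single b 1) := by
    rw [mulVec_add, mulVec_smul, mulVec_smul, IsHermitian.eigenvectorUnitary_mulVec,
      IsHermitian.eigenvectorUnitary_mulVec]
  have hdiag := posSemidef_diagonal_sub_smul_vecMulVec hA.eigenvalues_nonneg hab hlam ha hb hαβ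
  convert hdiag.mul_mul_conjTranspose_same U using 1
  rw [mul_sub, sub_mul, Matrix.mul_smul, Matrix.smul_mul, mul_vecMulVec_star_mul_conjTranspose, hv]
  conv_lhs => rw [hA.1.spectral_theorem]
  rfl

theorem IsHermitian.star_dotProduct_self_smul_eigenvectorBasis_add_smul {A : Matrix ι ι 𝕜}
    (hA : A.IsHermitian) {a b : ι} (hab : a ≠ b) (α β : 𝕜) :
    star (α • ⇑(hA.eigenvectorBasis a) + β • ⇑(hA.eigenvectorBasis b)) ⬝ᵥ
      (α • ⇑(hA.eigenvectorBasis a) + β • ⇑(hA.eigenvectorBasis b)) = star α * α + star β * β := by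
  rw [← eigenvectorUnitary_mulVec, ← eigenvectorUnitary_mulVec, ← mulVec_smul, ← mulVec_smul,
    ← mulVec_add, star_mulVec_dotProduct_mulVec_of_mem_unitaryGroup hA.eigenvectorUnitary.2]
  simp [dotProduct_add, hab, hab.symm, mul_comm]

end Matrix

theorem vecMulVec_mem_zeroSet {n : ℕ} {P : MvPolynomial (Fin n) ℂ} {v : Fin n → ℂ}
    (hv : star v ⬝ᵥ v = 1) (hPv : MvPolynomial.eval v P = 0) :
    vecMulVec v (star v) ∈ ZeroSet P :=
  ⟨1, fun _ => 1, fun _ => v, fun _ => zero_le_one, by simp, fun _ => hv, fun _ => hPv, by simp⟩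

theorem IsDensityMatrix.exists_eq_smul_add_smul {n : ℕ} {ρ M : Matrix (Fin n) (Fin n) ℂ}
    (hρ : IsDensityMatrix ρ) (hM : M.trace = 1) {lam : ℝ} (hlam : lam < 1)
    (hsub : (ρ - (lam : ℂ) • M).PosSemidef) :
    ∃ ω, IsDensityMatrix ω ∧ ρ = (lam : ℂ) • M + ((1 - lam : ℝ) : ℂ) • ω := by
  have hlam' : ((1 - lam : ℝ) : ℂ) ≠ 0 := Complex.ofReal_ne_zero.mpr (by linarith)
  refine ⟨((1 - lam : ℝ)⁻¹ : ℂ) • (ρ - (lam : ℂ) • M), ⟨hsub.smul ?_, ?_⟩, ?_⟩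
  · exact_mod_cast inv_nonneg.mpr (by linarith : (0 : ℝ) ≤ 1 - lam)
  · rw [trace_smul, trace_sub, trace_smul, hρ.2, hM, smul_eq_mul, smul_eq_mul]
    field_simp
    push_cast
    ring
  · rw [smul_smul, mul_inv_cancel₀ hlam', one_smul, add_sub_cancel]

theorem stmt_11 {n : ℕ} (P : MvPolynomial (Fin n) ℂ) (D : ℕ) (hD : 1 ≤ D)
    (hP : P.IsHomogeneous D) (ρ : Matrix (Fin n) (Fin n) ℂ)
    (hρ : IsDensityMatrix ρ) (hrank : 2 ≤ ρ.rank) :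
    ∃ lam : ℝ, 0 < lam ∧
      ∃ ρL ∈ ZeroSet P, ∃ ω : Matrix (Fin n) (Fin n) ℂ, IsDensityMatrix ω ∧
        ρ = ((lam : ℝ) : ℂ) • ρL + ((1 - lam : ℝ) : ℂ) • ω := by
  have hH := hρ.1.isHermitian
  obtain ⟨a, b, hab, ha0, hb0⟩ := hH.exists_ne_eigenvalues_ne_zero hrank
  have ha : 0 < hH.eigenvalues a := (hρ.1.eigenvalues_nonneg a).lt_of_ne' ha0
  have hb : 0 < hH.eigenvalues b := (hρ.1.eigenvalues_nonneg b).lt_of_ne' hb0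
  obtain ⟨α, β, hαβ, hPv⟩ := hP.exists_normalized_eval_smul_add_smul_eq_zero (by omega)
    (hH.eigenvectorBasis a) (hH.eigenvectorBasis b)
  have hv := (hH.star_dotProduct_self_smul_eigenvectorBasis_add_smul hab α β).trans hαβ
  set lam := min (min (hH.eigenvalues a) (hH.eigenvalues b)) (1 / 2)
  have hlam : 0 < lam := lt_min (lt_min ha hb) one_half_pos
  have hlam_lt : lam < 1 := (min_le_right _ _).trans_lt one_half_lt_one
  have hsub := hρ.1.sub_smul_vecMulVec_eigenvectorBasis hab hlam.le
    ((min_le_left _ _).trans (min_le_left _ _)) ((min_le_left _ _).trans (min_le_right _ _)) hαβ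
  obtain ⟨ω, hω, hρω⟩ := hρ.exists_eq_smul_add_smul
    (by rw [trace_vecMulVec, dotProduct_comm, hv]) hlam_lt hsub
  exact ⟨lam, hlam, _, vecMulVec_mem_zeroSet hv hPv, ω, hω, hρω⟩
end

section
/- Let f be a nonnegative real-valued function on the unit vectors of ℂ^n and let E be its convex roof extension to density matrices, E(ρ) := inf over all finite pure-state ensembles {(p_i, ψ_i)} of ρ of Σ_i p_i f(ψ_i). Let ρ and π be density matrices with ρ ≠ π, and suppose k > 0 is such that σ := ρ + (k / D(ρ,π))·(ρ − π) is a density matrix. Then E(ρ) ≤ (D(ρ,π) / D(σ,π))·(E(σ) − E(π)) + E(π); in particular, if E(π) = 0 then E(ρ) ≤ (D(ρ,π) / D(σ,π))·E(σ). -/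
open Matrix
open scoped ComplexOrder

/-- The convex roof extension of a function `f` on unit vectors to density matrices:
the infimum of `∑ i, p i * f (ψ i)` over all finite pure-state ensembles of `ρ`. -/
noncomputable def convexRoof {n : ℕ} (f : (Fin n → ℂ) → ℝ)
    (ρ : Matrix (Fin n) (Fin n) ℂ) : ℝ :=
  sInf { x : ℝ | ∃ (m : ℕ) (p : Fin m → ℝ) (ψ : Fin m → Fin n → ℂ),
    (∀ i, 0 ≤ p i) ∧ (∑ i, p i) = 1 ∧ (∀ i, star (ψ i) ⬝ᵥ ψ i = 1) ∧
    ρ = ∑ i, ((p i : ℝ) : ℂ) • Matrix.vecMulVec (ψ i) (star (ψ i)) ∧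
    x = ∑ i, p i * f (ψ i) }

/-! With `D = D(ρ,π)`, the state `ρ` lies on the segment from `π` to `σ`:
`ρ = (D / (D + k)) • σ + (k / (D + k)) • π`. Since `σ - π = (1 + k / D) • (ρ - π)` and the trace
distance is positively homogeneous, `D(σ,π) = D + k`, so the coefficient of `σ` is
`D(ρ,π) / D(σ,π)`. The bound is then convexity of the convex roof: mixing an ensemble of `σ` with
one of `π` gives an ensemble of the mixture. -/

open Polynomial Unitary

namespace Matrix

variable {𝕜 : Type*} [RCLike 𝕜] {n : Type*} [Fintype n] [DecidableEq n]

theorem charpoly_conjStarAlgAut (U : unitaryGroup n 𝕜) (B : Matrix n n 𝕜) :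
    (conjStarAlgAut 𝕜 _ U B).charpoly = B.charpoly := by
  rw [conjStarAlgAut_apply, charpoly_mul_comm, ← Matrix.mul_assoc]
  simp

theorem roots_charpoly_conjStarAlgAut_diagonal (U : unitaryGroup n 𝕜) (d : n → 𝕜) :
    (conjStarAlgAut 𝕜 _ U (diagonal d)).charpoly.roots = Finset.univ.val.map d := by
  rw [charpoly_conjStarAlgAut, charpoly_diagonal, roots_prod]
  · simp
  · simp [Finset.prod_ne_zero_iff, X_sub_C_ne_zero]

namespace IsHermitian

variable {A : Matrix n n 𝕜} (hA : A.IsHermitian)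
include hA

theorem sum_abs_eigenvalues_of_eq_smul {B : Matrix n n 𝕜} (hB : B.IsHermitian) {c : ℝ}
    (hc : 0 ≤ c) (hBA : B = (c : 𝕜) • A) :
    ∑ i, |hB.eigenvalues i| = c * ∑ i, |hA.eigenvalues i| := by
  subst hBA
  have hdiag : (c : 𝕜) • A = conjStarAlgAut 𝕜 _ hA.eigenvectorUnitary
      (diagonal (RCLike.ofReal ∘ (c • hA.eigenvalues))) := by
    conv_lhs => rw [hA.spectral_theorem]
    rw [← map_smul, ← diagonal_smul]
    congr 2
    ext i
    simp
  have hroots : Finset.univ.val.map (RCLike.ofReal ∘ hB.eigenvalues) =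
      Finset.univ.val.map ((RCLike.ofReal : ℝ → 𝕜) ∘ (c • hA.eigenvalues)) := by
    rw [← hB.roots_charpoly_eq_eigenvalues, ← roots_charpoly_conjStarAlgAut_diagonal, ← hdiag]
  have := congrArg (fun s : Multiset 𝕜 => (s.map (‖·‖)).sum) hroots
  simpa [Multiset.map_map, Function.comp_def, abs_mul, abs_of_nonneg hc, Finset.mul_sum] using this

theorem eq_sum_eigenvalues_smul_vecMulVec :
    A = ∑ i, (hA.eigenvalues i : 𝕜) •
      vecMulVec ⇑(hA.eigenvectorBasis i) (star ⇑(hA.eigenvectorBasis i)) := by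
  conv_lhs => rw [hA.spectral_theorem, conjStarAlgAut_apply]
  ext a b
  rw [Matrix.mul_apply, Matrix.sum_apply]
  simp [mul_diagonal, vecMulVec_apply, mul_assoc, mul_left_comm]

theorem star_eigenvectorBasis_dotProduct_self (i : n) :
    star ⇑(hA.eigenvectorBasis i) ⬝ᵥ ⇑(hA.eigenvectorBasis i) = 1 := by
  rw [dotProduct_comm, ← EuclideanSpace.inner_eq_star_dotProduct, inner_self_eq_norm_sq_to_K,
    hA.eigenvectorBasis.orthonormal.1 i]
  simp

end IsHermitian
end Matrix

theorem traceDist_eq_of_sub_eq_smul {n : ℕ} {ρ π σ τ : Matrix (Fin n) (Fin n) ℂ}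
    (hρπ : (ρ - π).IsHermitian) {c : ℝ} (hc : 0 ≤ c) (h : σ - τ = (c : ℂ) • (ρ - π)) :
    traceDist σ τ = c * traceDist ρ π := by
  have hστ : (σ - τ).IsHermitian := h ▸ hρπ.smul (Complex.conj_ofReal c)
  rw [traceDist, traceDist, dif_pos hρπ, dif_pos hστ, hρπ.sum_abs_eigenvalues_of_eq_smul hστ hc h]
  ring

theorem traceDist_pos {n : ℕ} {ρ π : Matrix (Fin n) (Fin n) ℂ}
    (hρπ : (ρ - π).IsHermitian) (hne : ρ ≠ π) : 0 < traceDist ρ π := by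
  rw [traceDist, dif_pos hρπ]
  obtain ⟨i, hi⟩ := Function.ne_iff.mp (mt hρπ.eigenvalues_eq_zero_iff.mp (sub_ne_zero.mpr hne))
  exact mul_pos one_half_pos
    (Finset.sum_pos' (fun j _ => abs_nonneg _) ⟨i, Finset.mem_univ i, abs_pos.mpr hi⟩)

section ConvexRoof

variable {n : ℕ} (f : (Fin n → ℂ) → ℝ)

def ensembleAverages (ρ : Matrix (Fin n) (Fin n) ℂ) : Set ℝ :=
  { x : ℝ | ∃ (m : ℕ) (p : Fin m → ℝ) (ψ : Fin m → Fin n → ℂ),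
    (∀ i, 0 ≤ p i) ∧ (∑ i, p i) = 1 ∧ (∀ i, star (ψ i) ⬝ᵥ ψ i = 1) ∧
    ρ = ∑ i, ((p i : ℝ) : ℂ) • Matrix.vecMulVec (ψ i) (star (ψ i)) ∧
    x = ∑ i, p i * f (ψ i) }

theorem convexRoof_eq_sInf_ensembleAverages (ρ : Matrix (Fin n) (Fin n) ℂ) :
    convexRoof f ρ = sInf (ensembleAverages f ρ) :=
  rfl

theorem ensembleAverages_nonempty {ρ : Matrix (Fin n) (Fin n) ℂ} (hρ : IsDensityMatrix ρ) :
    (ensembleAverages f ρ).Nonempty := by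
  obtain ⟨hpsd, htr⟩ := hρ
  have hsum : ∑ i, hpsd.1.eigenvalues i = 1 := by
    rw [hpsd.1.trace_eq_sum_eigenvalues, ← RCLike.ofReal_sum] at htr
    exact RCLike.ofReal_injective (K := ℂ) (by rw [htr, RCLike.ofReal_one])
  exact ⟨_, n, hpsd.1.eigenvalues, fun i => ⇑(hpsd.1.eigenvectorBasis i), hpsd.eigenvalues_nonneg,
    hsum, hpsd.1.star_eigenvectorBasis_dotProduct_self, hpsd.1.eq_sum_eigenvalues_smul_vecMulVec,
    rfl⟩

theorem bddBelow_ensembleAverages (hf : ∀ ψ : Fin n → ℂ, star ψ ⬝ᵥ ψ = 1 → 0 ≤ f ψ)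
    (ρ : Matrix (Fin n) (Fin n) ℂ) : BddBelow (ensembleAverages f ρ) := by
  refine ⟨0, ?_⟩
  rintro x ⟨m, p, ψ, hp, -, hψ, -, rfl⟩
  exact Finset.sum_nonneg fun i _ => mul_nonneg (hp i) (hf _ (hψ i))

theorem add_mem_ensembleAverages {σ π : Matrix (Fin n) (Fin n) ℂ} {a b : ℝ} (ha : 0 ≤ a)
    (hb : 0 ≤ b) (hab : a + b = 1) {x y : ℝ} (hx : x ∈ ensembleAverages f σ)
    (hy : y ∈ ensembleAverages f π) :
    a * x + b * y ∈ ensembleAverages f ((a : ℂ) • σ + (b : ℂ) • π) := by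
  obtain ⟨m₁, p₁, ψ₁, hp₁, hs₁, hψ₁, rfl, rfl⟩ := hx
  obtain ⟨m₂, p₂, ψ₂, hp₂, hs₂, hψ₂, rfl, rfl⟩ := hy
  refine ⟨m₁ + m₂, Fin.append (a • p₁) (b • p₂), Fin.append ψ₁ ψ₂, ?_, ?_, ?_, ?_, ?_⟩
  · exact Fin.addCases (by simpa using fun i => mul_nonneg ha (hp₁ i))
      (by simpa using fun i => mul_nonneg hb (hp₂ i))
  · simp [Fin.sum_univ_add, ← Finset.mul_sum, hs₁, hs₂, hab]
  · exact Fin.addCases (by simpa using hψ₁) (by simpa using hψ₂)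
  · simp [Fin.sum_univ_add, Finset.smul_sum, smul_smul]
  · simp [Fin.sum_univ_add, Finset.mul_sum, mul_assoc]

theorem convexRoof_add_le (hf : ∀ ψ : Fin n → ℂ, star ψ ⬝ᵥ ψ = 1 → 0 ≤ f ψ)
    {σ π : Matrix (Fin n) (Fin n) ℂ} (hσ : IsDensityMatrix σ) (hπ : IsDensityMatrix π)
    {a b : ℝ} (ha : 0 ≤ a) (hb : 0 ≤ b) (hab : a + b = 1) :
    convexRoof f ((a : ℂ) • σ + (b : ℂ) • π) ≤ a * convexRoof f σ + b * convexRoof f π := by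
  simp only [convexRoof_eq_sInf_ensembleAverages]
  rw [← smul_eq_mul, ← smul_eq_mul b, ← Real.sInf_smul_of_nonneg ha,
    ← Real.sInf_smul_of_nonneg hb,
    ← csInf_add ((ensembleAverages_nonempty f hσ).smul_set)
      ((bddBelow_ensembleAverages f hf σ).smul_of_nonneg ha)
      ((ensembleAverages_nonempty f hπ).smul_set)
      ((bddBelow_ensembleAverages f hf π).smul_of_nonneg hb)]
  refine csInf_le_csInf (bddBelow_ensembleAverages f hf _)
    (((ensembleAverages_nonempty f hσ).smul_set).add (ensembleAverages_nonempty f hπ).smul_set) ?_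
  rintro _ ⟨_, ⟨x, hx, rfl⟩, _, ⟨y, hy, rfl⟩, rfl⟩
  exact add_mem_ensembleAverages f ha hb hab hx hy

end ConvexRoof

theorem stmt_16 {n : ℕ} (f : (Fin n → ℂ) → ℝ)
    (hf : ∀ ψ : Fin n → ℂ, star ψ ⬝ᵥ ψ = 1 → 0 ≤ f ψ)
    (ρ π : Matrix (Fin n) (Fin n) ℂ)
    (hρ : IsDensityMatrix ρ) (hπ : IsDensityMatrix π) (hne : ρ ≠ π)
    (k : ℝ) (hk : 0 < k)
    (hσ : IsDensityMatrix (ρ + ((k / traceDist ρ π : ℝ) : ℂ) • (ρ - π))) :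
    convexRoof f ρ ≤
      (traceDist ρ π / traceDist (ρ + ((k / traceDist ρ π : ℝ) : ℂ) • (ρ - π)) π) *
        (convexRoof f (ρ + ((k / traceDist ρ π : ℝ) : ℂ) • (ρ - π)) - convexRoof f π) +
      convexRoof f π ∧
    (convexRoof f π = 0 →
      convexRoof f ρ ≤
        (traceDist ρ π / traceDist (ρ + ((k / traceDist ρ π : ℝ) : ℂ) • (ρ - π)) π) *
          convexRoof f (ρ + ((k / traceDist ρ π : ℝ) : ℂ) • (ρ - π))) := by
  have hρπ : (ρ - π).IsHermitian := hρ.1.1.sub hπ.1.1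
  set D := traceDist ρ π
  set σ := ρ + ((k / D : ℝ) : ℂ) • (ρ - π)
  have hD : 0 < D := traceDist_pos hρπ hne
  have hσ_sub : σ - π = ((1 + k / D : ℝ) : ℂ) • (ρ - π) := by
    simp only [σ]
    push_cast
    module
  have hσπ : traceDist σ π = D + k := by
    rw [traceDist_eq_of_sub_eq_smul hρπ (by positivity) hσ_sub]
    change (1 + k / D) * D = D + k
    field_simp
  have hρ_mix : ρ = ((D / (D + k) : ℝ) : ℂ) • σ + ((k / (D + k) : ℝ) : ℂ) • π := by
    have hD' : (D : ℂ) ≠ 0 := by exact_mod_cast hD.ne'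
    have hDk : (D : ℂ) + k ≠ 0 := by exact_mod_cast (add_pos hD hk).ne'
    simp only [σ]
    push_cast
    match_scalars
    · field_simp
    · field_simp
      ring
  have hconv := convexRoof_add_le f hf hσ hπ (a := D / (D + k)) (b := k / (D + k))
    (by positivity) (by positivity) (by field_simp)
  rw [← hρ_mix] at hconv
  have hweights : D / (D + k) * (convexRoof f σ - convexRoof f π) + convexRoof f π =
      D / (D + k) * convexRoof f σ + k / (D + k) * convexRoof f π := by
    field_simp
    ring
  refine ⟨by rw [hσπ, hweights]; exact hconv, fun hπ0 => ?_⟩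
  rw [hσπ]
  simpa [hπ0] using hconv
end
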